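/- Let s ≥ 1 be an integer, A > 0, ε ≥ 0, m ∈ [−1, 1], and ρ ∈ ℝ. Suppose |ρ| ≥ A·|m|^{2s−1} and |ρ|·√(1 − m²) ≤ ε. Then either |m| ≤ (2ε/A)^{1/(2s−1)} or 1 − |m| ≤ (2^{2s−1}/A)²·ε². -/

import Mathlib

/-!
With `x = |m|` and `n = 2s - 1`, the hypotheses give `A xⁿ √(1 - x²) ≤ ε`. Split at `x = 1/2`.
For `x ≤ 1/2` the factor `√(1 - x²)` is at least `1/2`, so `xⁿ ≤ 2ε/A`. For `x ≥ 1/2` the factor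
`xⁿ` is at least `2⁻ⁿ`, so `√(1 - x²) ≤ 2ⁿε/A`, and `1 - x ≤ 1 - x²` for `x ∈ [0, 1]`.
-/

open Real

lemma half_le_sqrt_one_sub_sq {x : ℝ} (hx : |x| ≤ 1 / 2) : 1 / 2 ≤ √(1 - x ^ 2) := by
  rw [le_sqrt (by norm_num) (by nlinarith [sq_abs x, abs_nonneg x])]
  nlinarith [sq_abs x, abs_nonneg x]

lemma one_sub_le_one_sub_sq {x : ℝ} (hx₀ : 0 ≤ x) (hx₁ : x ≤ 1) : 1 - x ≤ 1 - x ^ 2 := by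
  nlinarith

section NearCritical

variable {n : ℕ} {A ε x : ℝ}

lemma le_rpow_inv_of_mul_pow_mul_sqrt_le (hn : n ≠ 0) (hA : 0 < A) (hx₀ : 0 ≤ x)
    (hx : x ≤ 1 / 2) (h : A * x ^ n * √(1 - x ^ 2) ≤ ε) :
    x ≤ (2 * ε / A) ^ (n⁻¹ : ℝ) := by
  have hpow : x ^ n ≤ 2 * ε / A := by
    rw [le_div_iff₀ hA]
    calc x ^ n * A = 2 * (A * x ^ n * (1 / 2)) := by ring
      _ ≤ 2 * (A * x ^ n * √(1 - x ^ 2)) := by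
          gcongr
          exact half_le_sqrt_one_sub_sq (by rwa [abs_of_nonneg hx₀])
      _ ≤ 2 * ε := by gcongr
  calc x = (x ^ n) ^ (n⁻¹ : ℝ) := (pow_rpow_inv_natCast hx₀ hn).symm
    _ ≤ (2 * ε / A) ^ (n⁻¹ : ℝ) := by gcongr

lemma one_sub_le_of_mul_pow_mul_sqrt_le (hA : 0 < A) (hx : 1 / 2 ≤ x) (hx₁ : x ≤ 1)
    (h : A * x ^ n * √(1 - x ^ 2) ≤ ε) :
    1 - x ≤ (2 ^ n / A) ^ 2 * ε ^ 2 := by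
  have hsqrt : √(1 - x ^ 2) ≤ 2 ^ n / A * ε := by
    rw [div_mul_eq_mul_div, le_div_iff₀ hA]
    calc √(1 - x ^ 2) * A = 2 ^ n * (A * (1 / 2) ^ n * √(1 - x ^ 2)) := by
          rw [one_div, inv_pow]; field_simp
      _ ≤ 2 ^ n * (A * x ^ n * √(1 - x ^ 2)) := by gcongr
      _ ≤ 2 ^ n * ε := by gcongr
  calc 1 - x ≤ 1 - x ^ 2 := one_sub_le_one_sub_sq (by linarith) hx₁
    _ = √(1 - x ^ 2) ^ 2 := (sq_sqrt (by nlinarith)).symm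
    _ ≤ (2 ^ n / A * ε) ^ 2 := by gcongr
    _ = (2 ^ n / A) ^ 2 * ε ^ 2 := mul_pow _ _ _

theorem le_rpow_inv_or_one_sub_le_of_mul_pow_mul_sqrt_le (hn : n ≠ 0) (hA : 0 < A)
    (hx₀ : 0 ≤ x) (hx₁ : x ≤ 1) (h : A * x ^ n * √(1 - x ^ 2) ≤ ε) :
    x ≤ (2 * ε / A) ^ (n⁻¹ : ℝ) ∨ 1 - x ≤ (2 ^ n / A) ^ 2 * ε ^ 2 := by
  rcases le_total x (1 / 2) with hx | hx
  · exact .inl (le_rpow_inv_of_mul_pow_mul_sqrt_le hn hA hx₀ hx h)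
  · exact .inr (one_sub_le_of_mul_pow_mul_sqrt_le hA hx hx₁ h)

end NearCritical

theorem near_critical_dichotomy (s : ℕ) (hs : 1 ≤ s) (A ε m ρ : ℝ)
    (hA : 0 < A) (hm : m ∈ Set.Icc (-1 : ℝ) 1)
    (hlow : A * |m| ^ (2 * s - 1) ≤ |ρ|)
    (hgrad : |ρ| * Real.sqrt (1 - m ^ 2) ≤ ε) :
    |m| ≤ (2 * ε / A) ^ ((1 : ℝ) / (2 * (s : ℝ) - 1)) ∨
      1 - |m| ≤ ((2 ^ (2 * s - 1) : ℝ) / A) ^ 2 * ε ^ 2 := by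
  have hexp : ((2 * s - 1 : ℕ) : ℝ) = 2 * (s : ℝ) - 1 := by
    rw [Nat.cast_sub (by omega)]; push_cast; ring
  have h : A * |m| ^ (2 * s - 1) * √(1 - |m| ^ 2) ≤ ε := by
    rw [sq_abs]
    exact (mul_le_mul_of_nonneg_right hlow (sqrt_nonneg _)).trans hgrad
  rw [one_div, ← hexp]
  exact le_rpow_inv_or_one_sub_le_of_mul_pow_mul_sqrt_le (by omega) hA (abs_nonneg m)
    (abs_le.mpr hm) h
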